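/- arXiv:math/0304355 — 3 statements merged into one kernel-verified Lean document; each statement's English description precedes it below -/
import Mathlib

section
/- Every multiplicative map χ : I → {0,1} that is not identically 0 is of exactly one of the following forms: either χ(z) = 1 and χ is the constant function 1; or χ(z) = 0 and there is a unique path γ ∈ Y ∪ Z such that for all α ∈ Y, χ(α) = 1 if and only if α is an initial segment of γ (i.e. γ = αμ for some path μ, possibly of length 0). -/
namespace GraphCstar

/-- A directed graph: vertices, edges, source and range maps. -/
structure Graph where
  V : Type
  Ed : Type
  src : Ed → V
  rng : Ed → V

variable (G : Graph)

/-- Validity of a list of edges as a path starting at vertex `v`. -/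
def Valid : G.V → List G.Ed → Prop
  | _, [] => True
  | v, e :: l => G.src e = v ∧ Valid (G.rng e) l

/-- Terminal vertex of a list of edges starting at `v`. -/
def rngTo : G.V → List G.Ed → G.V
  | v, [] => v
  | _, e :: l => rngTo (G.rng e) l

theorem valid_append (l₁ l₂ : List G.Ed) (v : G.V) :
    Valid G v (l₁ ++ l₂) ↔ Valid G v l₁ ∧ Valid G (rngTo G v l₁) l₂ := by
  induction l₁ generalizing v with
  | nil => simp [Valid, rngTo]
  | cons e l ih => simp [Valid, rngTo, ih, and_assoc]

theorem rngTo_append (l₁ l₂ : List G.Ed) (v : G.V) :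
    rngTo G v (l₁ ++ l₂) = rngTo G (rngTo G v l₁) l₂ := by
  induction l₁ generalizing v with
  | nil => rfl
  | cons e l ih => simp [rngTo, ih]

theorem valid_drop {v : G.V} {l : List G.Ed} (n : ℕ) (h : Valid G v l) :
    Valid G (rngTo G v (l.take n)) (l.drop n) := by
  have h' : Valid G v (l.take n ++ l.drop n) := by
    rw [List.take_append_drop]; exact h
  exact ((valid_append G _ _ _).mp h').2

/-- A finite path in the graph `G`; vertices are the paths of length `0`. -/
structure FinPath where
  start : G.V
  edges : List G.Ed
  valid : Valid G start edges

namespace FinPath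

variable {G}

/-- The terminal vertex (range) of a finite path. -/
def rngF (α : FinPath G) : G.V := rngTo G α.start α.edges

/-- The length of a finite path. -/
def len (α : FinPath G) : ℕ := α.edges.length

/-- The finite path of length `0` at the vertex `v`. -/
def vp (v : G.V) : FinPath G := ⟨v, [], trivial⟩

/-- The finite path consisting of the single edge `e`. -/
def ep (e : G.Ed) : FinPath G := ⟨G.src e, [e], ⟨rfl, trivial⟩⟩

/-- Concatenation of finite paths. -/
def concat (α β : FinPath G) (h : β.start = α.rngF) : FinPath G :=
  ⟨α.start, α.edges ++ β.edges,
    (valid_append G _ _ _).mpr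
      ⟨α.valid, by
        show Valid G α.rngF β.edges
        rw [← h]; exact β.valid⟩⟩

theorem rngF_concat (α β : FinPath G) (h : β.start = α.rngF) :
    (α.concat β h).rngF = β.rngF := by
  show rngTo G α.start (α.edges ++ β.edges) = _
  rw [rngTo_append]
  show rngTo G α.rngF β.edges = _
  rw [← h]; rfl

end FinPath

/-- `α` is an initial segment of `β`. -/
def IsPref (α β : FinPath G) : Prop := α.start = β.start ∧ α.edges <+: β.edges

/-- The "remainder" path: if `α` is an initial segment of `β`, the path `μ` with
`β = αμ` (for other inputs the value is junk). -/
def diff (α β : FinPath G) : FinPath G :=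
  ⟨rngTo G β.start (β.edges.take α.edges.length),
    β.edges.drop α.edges.length, valid_drop G _ β.valid⟩

open Classical in
/-- Totalized concatenation of finite paths (junk value when endpoints do not match). -/
noncomputable def catP (α β : FinPath G) : FinPath G :=
  if h : β.start = α.rngF then α.concat β h else α

open Classical in
/-- The product on `T = {(α,β) ∈ Y × Y : r(α) = r(β)} ∪ {z}`, with `z` encoded as `none`. -/
noncomputable def mulT :
    Option (FinPath G × FinPath G) → Option (FinPath G × FinPath G) →
      Option (FinPath G × FinPath G)
  | none, _ => none
  | _, none => none
  | some (α₁, β₁), some (α₂, β₂) =>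
    if IsPref G β₁ α₂ then some (catP G α₁ (diff G β₁ α₂), β₂)
    else if IsPref G α₂ β₁ then some (α₁, catP G β₂ (diff G α₂ β₁))
    else none

/-- The involution on `T`. -/
def starT :
    Option (FinPath G × FinPath G) → Option (FinPath G × FinPath G)
  | none => none
  | some (α, β) => some (β, α)

/-- The subset of `Option (FinPath G × FinPath G)` corresponding to
`T = {(α,β) : r(α) = r(β)} ∪ {z}`. -/
def TsetT : Set (Option (FinPath G × FinPath G)) :=
  {t | ∀ α β : FinPath G, t = some (α, β) → α.rngF = β.rngF}

/-- An infinite path in the graph `G`. -/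
structure InfPath where
  seq : ℕ → G.Ed
  valid : ∀ i, G.src (seq (i + 1)) = G.rng (seq i)

/-- The initial vertex of an infinite path. -/
def InfPath.start {G : Graph} (z : InfPath G) : G.V := G.src (z.seq 0)

/-- Prepending an edge to an infinite path. -/
def consInf (e : G.Ed) (z : InfPath G) (h : z.start = G.rng e) : InfPath G where
  seq := fun n =>
    match n with
    | 0 => e
    | m + 1 => z.seq m
  valid := fun i =>
    match i with
    | 0 => h
    | m + 1 => z.valid m

/-- Prepending a finite edge list to an infinite path (with the starting vertex recorded). -/
def appendInfAux :
    (l : List G.Ed) → (v : G.V) → Valid G v l → (z : InfPath G) →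
      z.start = rngTo G v l → {w : InfPath G // w.start = v}
  | [], _, _, z, h => ⟨z, h⟩
  | e :: l, v, hv, z, h =>
    let w := appendInfAux l (G.rng e) hv.2 z h
    ⟨consInf G e w.1 w.2, hv.1⟩

/-- Concatenation of a finite path with an infinite path. -/
def FinPath.concatInf {G : Graph} (α : FinPath G) (z : InfPath G)
    (h : z.start = α.rngF) : InfPath G :=
  (appendInfAux G α.edges α.start α.valid z h).1

/-- The path space `Y ∪ Z` of all finite and infinite paths. -/
def PathSp := FinPath G ⊕ InfPath G

/-- The initial vertex of a (finite or infinite) path. -/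
def startOf : PathSp G → G.V
  | .inl α => α.start
  | .inr z => z.start

/-- The length of a path, in `ℕ∞`. -/
def lenOf : PathSp G → ℕ∞
  | .inl α => (α.edges.length : ℕ∞)
  | .inr _ => ⊤

/-- The `i`-th edge (0-indexed) of a path, if it exists. -/
def nthEdge : PathSp G → ℕ → Option G.Ed
  | .inl α, i => α.edges[i]?
  | .inr z, i => some (z.seq i)

/-- `x = αγ` for some (finite or infinite, possibly length `0`) path `γ`;
that is, `α` is an initial segment of `x`, i.e. `x ∈ D_α`. -/
def Ext (α : FinPath G) (x : PathSp G) : Prop :=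
  (∃ (β : FinPath G) (h : β.start = α.rngF), x = .inl (α.concat β h)) ∨
  (∃ (w : InfPath G) (h : w.start = α.rngF), x = .inr (α.concatInf w h))

/-- The basic set `D_α ⊆ Y ∪ Z`. -/
def Dset (α : FinPath G) : Set (PathSp G) := {x | Ext G α x}

/-- The topology on the path space, generated by the sets `D_α` and their complements. -/
def pathTop : TopologicalSpace (PathSp G) :=
  .generateFrom (Set.range (Dset G) ∪ Set.range fun α => (Dset G α)ᶜ)

/-- The vertex `v` emits infinitely many edges. -/
def Vinf (v : G.V) : Prop := {e | G.src e = v}.Infinite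

/-- Membership in `X = Y_∞ ∪ Z`. -/
def memX : PathSp G → Prop
  | .inl α => Vinf G α.rngF
  | .inr _ => True

/-- The set `X = Y_∞ ∪ Z`. -/
def Xset : Set (PathSp G) := {x | memX G x}

/-- Tail equivalence of paths: `x = αγ` and `y = βγ` for finite paths `α, β`
and a common (finite or infinite) path `γ`. -/
def TailEq (x y : PathSp G) : Prop :=
  (∃ (α β γ : FinPath G) (h₁ : γ.start = α.rngF) (h₂ : γ.start = β.rngF),
      x = .inl (α.concat γ h₁) ∧ y = .inl (β.concat γ h₂)) ∨
  (∃ (α β : FinPath G) (w : InfPath G) (h₁ : w.start = α.rngF)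
      (h₂ : w.start = β.rngF),
      x = .inr (α.concatInf w h₁) ∧ y = .inr (β.concatInf w h₂))

/-- A subset of the path space is invariant (a union of tail-equivalence classes). -/
def InvariantS (F : Set (PathSp G)) : Prop :=
  ∀ x ∈ F, ∀ y, TailEq G x y → y ∈ F

/-- Membership `(x, k, y) ∈ G` for the path groupoid: `x = αγ`, `y = βγ` and
`k = l(α) - l(β)`. -/
def InG (x : PathSp G) (k : ℤ) (y : PathSp G) : Prop :=
  (∃ (α β γ : FinPath G) (h₁ : γ.start = α.rngF) (h₂ : γ.start = β.rngF),
      x = .inl (α.concat γ h₁) ∧ y = .inl (β.concat γ h₂) ∧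
        k = (α.len : ℤ) - (β.len : ℤ)) ∨
  (∃ (α β : FinPath G) (w : InfPath G) (h₁ : w.start = α.rngF)
      (h₂ : w.start = β.rngF),
      x = .inr (α.concatInf w h₁) ∧ y = .inr (β.concatInf w h₂) ∧
        k = (α.len : ℤ) - (β.len : ℤ))

/-- There is a finite path from `u` to `w`. -/
def Reach (u w : G.V) : Prop := ∃ β : FinPath G, β.start = u ∧ β.rngF = w

/-- A loop based at the vertex `v`. -/
def LoopAt (v : G.V) (α : FinPath G) : Prop :=
  α.edges ≠ [] ∧ α.start = v ∧ α.rngF = v ∧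
    ∀ i e, i + 1 < α.edges.length → α.edges[i]? = some e → G.rng e ≠ v

/-- Condition (K): no vertex has exactly one loop based at it. -/
def CondK : Prop := ¬ ∃ v : G.V, ∃! α : FinPath G, LoopAt G v α

/-- A point of the path space has trivial isotropy if whenever `x = αγ = βγ`
then `l(α) = l(β)`. -/
def TrivIso (x : PathSp G) : Prop :=
  ∀ α β : FinPath G,
    ((∃ (γ : FinPath G) (h₁ : γ.start = α.rngF) (h₂ : γ.start = β.rngF),
        x = .inl (α.concat γ h₁) ∧ x = .inl (β.concat γ h₂)) ∨
     (∃ (w : InfPath G) (h₁ : w.start = α.rngF) (h₂ : w.start = β.rngF),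
        x = .inr (α.concatInf w h₁) ∧ x = .inr (β.concatInf w h₂))) →
    α.len = β.len


open Classical in
/-- The product on the semilattice `I = Y ∪ {z}` of idempotents (`z = none`):
`αβ` is the longer of `α, β` if one is an initial segment of the other,
`z` otherwise, with `z` absorbing. -/
noncomputable def mulI :
    Option (FinPath G) → Option (FinPath G) → Option (FinPath G)
  | none, _ => none
  | _, none => none
  | some α, some β =>
    if IsPref G α β then some β
    else if IsPref G β α then some α
    else none

/-! Since `z` is absorbing, `χ(z) = 1` forces `χ ≡ 1`. If `χ(z) = 0`, multiplicativity forces any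
two paths in the support of `χ` to be comparable (else their product `z` would be sent to `1`) and
the support to be closed under initial segments. Such a chain contains at most one path of each length,
so it is the set of initial segments either of its longest member or of the infinite path that its
members exhaust; a path is determined by its initial segments, whence uniqueness. -/

section Paths

variable {G}

theorem valid_take {v : G.V} {l : List G.Ed} (n : ℕ) (h : Valid G v l) :
    Valid G v (l.take n) := by
  rw [← List.take_append_drop n l, valid_append] at h
  exact h.1

theorem valid_getElem_zero {v : G.V} {l : List G.Ed} (h : Valid G v l) (hl : 0 < l.length) :
    G.src l[0] = v := by
  cases l with
  | nil => simp at hl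
  | cons e l => exact h.1

theorem valid_chain {v : G.V} {l : List G.Ed} (h : Valid G v l) (i : ℕ) (hi : i + 1 < l.length) :
    G.src l[i + 1] = G.rng l[i] := by
  induction l generalizing v i with
  | nil => simp at hi
  | cons e l ih =>
    cases i with
    | zero => simpa using valid_getElem_zero h.2 (by simp at hi; omega)
    | succ j => simpa using ih h.2 j (by simp at hi; omega)

theorem appendInfAux_seq (l : List G.Ed) (v : G.V) (hv : Valid G v l) (w : InfPath G)
    (h : w.start = rngTo G v l) (i : ℕ) :
    (appendInfAux G l v hv w h).1.seq i =
      if hi : i < l.length then l[i] else w.seq (i - l.length) := by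
  induction l generalizing v i with
  | nil => simp [appendInfAux]
  | cons e l ih =>
    cases i with
    | zero => simp [appendInfAux, consInf]
    | succ j => simpa [appendInfAux, consInf] using ih (G.rng e) hv.2 h j

namespace FinPath

@[ext] theorem ext {α β : FinPath G} (hs : α.start = β.start) (he : α.edges = β.edges) :
    α = β := by
  cases α; cases β; cases hs; cases he; rfl

instance : PartialOrder (FinPath G) where
  le := IsPref G
  le_refl _ := ⟨rfl, List.prefix_refl _⟩
  le_trans _ _ _ h h' := ⟨h.1.trans h'.1, h.2.trans h'.2⟩
  le_antisymm _ _ h h' := ext h.1 (h.2.eq_of_length (le_antisymm h.2.length_le h'.2.length_le))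

theorem le_iff_isPref {α β : FinPath G} : α ≤ β ↔ IsPref G α β := Iff.rfl

theorem len_le_len_of_le {α β : FinPath G} (h : α ≤ β) : α.len ≤ β.len := h.2.length_le

theorem eq_of_le_of_len_eq {α β : FinPath G} (h : α ≤ β) (hl : α.len = β.len) : α = β :=
  ext h.1 (h.2.eq_of_length hl)

theorem eq_of_mem_chain_of_len_eq {S : Set (FinPath G)} (hS : IsChain (· ≤ ·) S) {α β : FinPath G}
    (hα : α ∈ S) (hβ : β ∈ S) (hl : α.len = β.len) : α = β :=
  (hS.total hα hβ).elim (eq_of_le_of_len_eq · hl) fun h => (eq_of_le_of_len_eq h hl.symm).symm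

def take (α : FinPath G) (n : ℕ) : FinPath G := ⟨α.start, α.edges.take n, valid_take n α.valid⟩

theorem take_le (α : FinPath G) (n : ℕ) : α.take n ≤ α := ⟨rfl, List.take_prefix _ _⟩

theorem len_take (α : FinPath G) (n : ℕ) : (α.take n).len = min n α.len := List.length_take

theorem concatInf_seq (α : FinPath G) (w : InfPath G) (h : w.start = α.rngF) (i : ℕ) :
    (α.concatInf w h).seq i =
      if hi : i < α.edges.length then α.edges[i] else w.seq (i - α.edges.length) :=
  appendInfAux_seq α.edges α.start α.valid w h i

theorem concatInf_start (α : FinPath G) (w : InfPath G) (h : w.start = α.rngF) :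
    (α.concatInf w h).start = α.start :=
  (appendInfAux G α.edges α.start α.valid w h).2

end FinPath

namespace InfPath

@[ext] theorem ext {w w' : InfPath G} (h : ∀ i, w.seq i = w'.seq i) : w = w' := by
  cases w; cases w'; congr; exact funext h

def drop (w : InfPath G) (n : ℕ) : InfPath G := ⟨fun i => w.seq (n + i), fun i => w.valid (n + i)⟩

theorem valid_ofFn_and_rngTo_ofFn (w : InfPath G) (n : ℕ) :
    Valid G w.start (List.ofFn fun i : Fin n => w.seq i) ∧
      rngTo G w.start (List.ofFn fun i : Fin n => w.seq i) = (w.drop n).start := by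
  induction n generalizing w with
  | zero => exact ⟨trivial, rfl⟩
  | succ n ih =>
    have htail : (List.ofFn fun i : Fin n => w.seq (i + 1)) =
        List.ofFn fun i : Fin n => (w.drop 1).seq i := by
      simp only [drop, Nat.add_comm 1]
    have hstart : (w.drop 1).start = G.rng (w.seq 0) := w.valid 0
    obtain ⟨hvalid, hrng⟩ := ih (w.drop 1)
    rw [List.ofFn_succ]
    refine ⟨⟨rfl, ?_⟩, ?_⟩
    · simpa [htail, hstart] using hvalid
    · simp only [rngTo, Fin.val_succ, Fin.val_zero, htail, ← hstart, hrng]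
      simp only [start, drop, Nat.add_zero, Nat.add_comm 1 n]

def take (w : InfPath G) (n : ℕ) : FinPath G :=
  ⟨w.start, List.ofFn fun i : Fin n => w.seq i, (valid_ofFn_and_rngTo_ofFn w n).1⟩

theorem drop_start (w : InfPath G) (n : ℕ) : (w.drop n).start = (w.take n).rngF :=
  (valid_ofFn_and_rngTo_ofFn w n).2.symm

theorem len_take (w : InfPath G) (n : ℕ) : (w.take n).len = n := List.length_ofFn

theorem take_edges_getElem (w : InfPath G) (n i : ℕ) (hi : i < (w.take n).edges.length) :
    (w.take n).edges[i] = w.seq i :=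
  List.getElem_ofFn hi

theorem take_concatInf_drop (w : InfPath G) (n : ℕ) :
    (w.take n).concatInf (w.drop n) (w.drop_start n) = w := by
  ext i
  rw [FinPath.concatInf_seq]
  split_ifs with hi
  · exact w.take_edges_getElem n i hi
  · have hn : (w.take n).edges.length = n := w.len_take n
    simp only [drop, hn]
    congr 1
    omega

end InfPath

theorem ext_inl_iff {α β : FinPath G} : Ext G α (.inl β) ↔ α ≤ β := by
  constructor
  · rintro (⟨μ, hμ, he⟩ | ⟨_, _, he⟩)
    · cases he
      exact ⟨rfl, List.prefix_append _ _⟩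
    · cases he
  · rintro ⟨hs, hp⟩
    have htake : α.edges = β.edges.take α.edges.length := List.prefix_iff_eq_take.mp hp
    refine Or.inl ⟨diff G α β, ?_, congrArg Sum.inl (FinPath.ext hs.symm ?_)⟩
    · change rngTo G β.start (β.edges.take α.edges.length) = rngTo G α.start α.edges
      rw [← htake, hs]
    · change β.edges = α.edges ++ β.edges.drop α.edges.length
      conv_lhs => rw [← List.take_append_drop α.edges.length β.edges, ← htake]

theorem ext_take (w : InfPath G) (n : ℕ) : Ext G (w.take n) (.inr w) :=
  Or.inr ⟨w.drop n, w.drop_start n, congrArg Sum.inr (w.take_concatInf_drop n).symm⟩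

theorem ext_inr_iff {α : FinPath G} {w : InfPath G} : Ext G α (.inr w) ↔ w.take α.len = α := by
  constructor
  · rintro (⟨_, _, he⟩ | ⟨μ, hμ, he⟩)
    · cases he
    · cases he
      refine FinPath.ext (α.concatInf_start μ hμ) (List.ext_getElem (InfPath.len_take _ _) ?_)
      intro i hi _
      rw [InfPath.take_edges_getElem, FinPath.concatInf_seq, dif_pos]
  · intro h
    rw [← h]
    exact ext_take w _

theorem eq_of_forall_ext_iff {x y : PathSp G} (h : ∀ α, Ext G α x ↔ Ext G α y) : x = y := by
  have not_ext_inl (w : InfPath G) (β : FinPath G) : ¬Ext G (w.take (β.len + 1)) (.inl β) := by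
    intro hext
    have := FinPath.len_le_len_of_le (ext_inl_iff.mp hext)
    rw [InfPath.len_take] at this
    omega
  rcases x with β | w <;> rcases y with β' | w'
  · refine congrArg Sum.inl (le_antisymm ?_ ?_)
    · exact ext_inl_iff.mp ((h β).mp (ext_inl_iff.mpr le_rfl))
    · exact ext_inl_iff.mp ((h β').mpr (ext_inl_iff.mpr le_rfl))
  · exact absurd ((h _).mpr (ext_take w' (β.len + 1))) (not_ext_inl w' β)
  · exact absurd ((h _).mp (ext_take w (β'.len + 1))) (not_ext_inl w β')
  · refine congrArg Sum.inr (InfPath.ext fun i => ?_)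
    have htake : w'.take (i + 1) = w.take (i + 1) := by
      simpa only [InfPath.len_take] using ext_inr_iff.mp ((h _).mp (ext_take w (i + 1)))
    have hi : i < (w.take (i + 1)).edges.length := by
      rw [← FinPath.len, InfPath.len_take]; omega
    rw [← w.take_edges_getElem _ i hi, ← w'.take_edges_getElem _ i (htake ▸ hi)]
    simp only [htake]

theorem InfPath.exists_take_eq {f : ℕ → FinPath G} (hf : Monotone f) (hlen : ∀ n, (f n).len = n) :
    ∃ w : InfPath G, ∀ n, w.take n = f n := by
  have hidx {i n : ℕ} (hi : i < n) : i < (f n).edges.length := hi.trans_eq (hlen n).symm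
  have agree {i m n : ℕ} (hi : i < m) (hmn : m ≤ n) :
      (f m).edges[i]'(hidx hi) = (f n).edges[i]'(hidx (hi.trans_le hmn)) :=
    (hf hmn).2.getElem _
  let w : InfPath G :=
    { seq := fun i => (f (i + 1)).edges[i]'(hidx (Nat.lt_add_one i))
      valid := fun i => by
        rw [agree (Nat.lt_add_one i) (Nat.le_succ _)]
        exact valid_chain (f (i + 2)).valid i (hidx (by omega)) }
  have hstart (n : ℕ) : w.start = (f n).start :=
    calc w.start = (f 1).start := valid_getElem_zero (f 1).valid (hidx one_pos)
      _ = (f 0).start := (hf zero_le_one).1.symm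
      _ = (f n).start := (hf n.zero_le).1
  refine ⟨w, fun n => FinPath.ext (hstart n) (List.ext_getElem ?_ fun i hi _ => ?_)⟩
  · rw [← FinPath.len, w.len_take, ← FinPath.len, hlen]
  · rw [w.take_edges_getElem n i hi]
    exact agree (Nat.lt_add_one i) (by rw [← FinPath.len, w.len_take] at hi; omega)

theorem exists_forall_mem_iff_ext_of_bddAbove {S : Set (FinPath G)} (hne : S.Nonempty)
    (hlow : IsLowerSet S) (hS : IsChain (· ≤ ·) S) (hbdd : BddAbove (FinPath.len '' S)) :
    ∃ γ : PathSp G, ∀ α, α ∈ S ↔ Ext G α γ := by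
  obtain ⟨γ, hγ, hγlen⟩ := Nat.sSup_mem (hne.image _) hbdd
  refine ⟨.inl γ, fun α => ⟨fun hα => ?_, fun h => hlow (ext_inl_iff.mp h) hγ⟩⟩
  have hlen : α.len ≤ γ.len := hγlen ▸ le_csSup hbdd ⟨α, hα, rfl⟩
  refine ext_inl_iff.mpr ((hS.total hα hγ).elim id fun hγα => ?_)
  exact (FinPath.eq_of_le_of_len_eq hγα (le_antisymm (FinPath.len_le_len_of_le hγα) hlen)).ge

theorem exists_forall_mem_iff_ext_of_not_bddAbove {S : Set (FinPath G)} (hlow : IsLowerSet S)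
    (hS : IsChain (· ≤ ·) S) (hbdd : ¬BddAbove (FinPath.len '' S)) :
    ∃ γ : PathSp G, ∀ α, α ∈ S ↔ Ext G α γ := by
  have hex (n : ℕ) : ∃ α ∈ S, α.len = n := by
    obtain ⟨_, ⟨β, hβ, rfl⟩, hn⟩ := not_bddAbove_iff.mp hbdd n
    exact ⟨β.take n, hlow (β.take_le n) hβ, by rw [FinPath.len_take]; omega⟩
  choose f hfS hflen using hex
  have hmono : Monotone f := monotone_nat_of_le_succ fun n =>
    (hS.total (hfS n) (hfS (n + 1))).elim id fun h => by
      have := FinPath.len_le_len_of_le h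
      rw [hflen, hflen] at this
      omega
  obtain ⟨w, hw⟩ := InfPath.exists_take_eq hmono hflen
  refine ⟨.inr w, fun α => ?_⟩
  rw [ext_inr_iff, hw]
  exact ⟨fun hα => FinPath.eq_of_mem_chain_of_len_eq hS (hfS _) hα (hflen _), fun h => h ▸ hfS _⟩

theorem existsUnique_forall_mem_iff_ext {S : Set (FinPath G)} (hne : S.Nonempty)
    (hlow : IsLowerSet S) (hS : IsChain (· ≤ ·) S) :
    ∃! γ : PathSp G, ∀ α, α ∈ S ↔ Ext G α γ := by
  obtain ⟨γ, hγ⟩ : ∃ γ : PathSp G, ∀ α, α ∈ S ↔ Ext G α γ := by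
    by_cases hbdd : BddAbove (FinPath.len '' S)
    · exact exists_forall_mem_iff_ext_of_bddAbove hne hlow hS hbdd
    · exact exists_forall_mem_iff_ext_of_not_bddAbove hlow hS hbdd
  exact ⟨γ, hγ, fun γ' hγ' => eq_of_forall_ext_iff fun α => (hγ' α).symm.trans (hγ α)⟩

end Paths

section Semicharacter

variable {G}

theorem mulI_none_left (t : Option (FinPath G)) : mulI G none t = none := rfl

theorem mulI_some_of_le {α β : FinPath G} (h : α ≤ β) : mulI G (some α) (some β) = some β := by
  simp only [mulI, if_pos (FinPath.le_iff_isPref.mp h)]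

theorem mulI_some_of_not_le {α β : FinPath G} (h : ¬α ≤ β) (h' : ¬β ≤ α) :
    mulI G (some α) (some β) = none := by
  rw [FinPath.le_iff_isPref] at h h'
  simp only [mulI, if_neg h, if_neg h']

variable {χ : Option (FinPath G) → ℕ}

theorem eq_one_of_map_none_eq_one (hmul : ∀ a b, χ (mulI G a b) = χ a * χ b)
    (h1 : χ none = 1) (t : Option (FinPath G)) : χ t = 1 := by
  simpa [mulI_none_left, h1, eq_comm] using hmul none t

theorem isLowerSet_support (hmul : ∀ a b, χ (mulI G a b) = χ a * χ b) :
    IsLowerSet {α : FinPath G | χ (some α) = 1} := by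
  intro β α hαβ (hβ : χ (some β) = 1)
  have h := hmul (some α) (some β)
  rwa [mulI_some_of_le hαβ, hβ, mul_one, eq_comm] at h

theorem isChain_support (hmul : ∀ a b, χ (mulI G a b) = χ a * χ b) (h0 : χ none = 0) :
    IsChain (· ≤ ·) {α : FinPath G | χ (some α) = 1} := by
  intro α (hα : χ (some α) = 1) β (hβ : χ (some β) = 1) _
  by_contra! h
  have h' := hmul (some α) (some β)
  rw [mulI_some_of_not_le h.1 h.2, h0, hα, hβ] at h'
  exact zero_ne_one h'

end Semicharacter

theorem semicharacter_classification_general (G : Graph)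
    (χ : Option (FinPath G) → ℕ)
    (hval : ∀ t, χ t = 0 ∨ χ t = 1)
    (hmul : ∀ a b, χ (mulI G a b) = χ a * χ b)
    (hne : ∃ t, χ t ≠ 0) :
    Xor' (χ none = 1 ∧ ∀ t, χ t = 1)
      (χ none = 0 ∧
        ∃! γ : PathSp G, ∀ α : FinPath G, (χ (some α) = 1 ↔ Ext G α γ)) := by
  rcases hval none with h0 | h1
  · have hsupp : {α : FinPath G | χ (some α) = 1}.Nonempty := by
      obtain ⟨_ | α, hα⟩ := hne
      · exact absurd h0 hα
      · exact ⟨α, (hval _).resolve_left hα⟩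
    refine Or.inr ⟨⟨h0, ?_⟩, fun h => by simp [h0] at h⟩
    exact existsUnique_forall_mem_iff_ext hsupp (isLowerSet_support hmul)
      (isChain_support hmul h0)
  · exact Or.inl ⟨⟨h1, eq_one_of_map_none_eq_one hmul h1⟩, fun h => by simp [h1] at h⟩

/-- Every multiplicative map `χ : I → {0,1}` that is not identically `0`
has exactly one of the following forms: either `χ(z) = 1` and `χ` is constantly `1`; or
`χ(z) = 0` and there is a unique path `γ ∈ Y ∪ Z` such that for all `α ∈ Y`,
`χ(α) = 1` iff `α` is an initial segment of `γ`. -/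
theorem semicharacter_classification (G : Graph) [Countable G.V] [Countable G.Ed]
    (χ : Option (FinPath G) → ℕ)
    (hval : ∀ t, χ t = 0 ∨ χ t = 1)
    (hmul : ∀ a b, χ (mulI G a b) = χ a * χ b)
    (hne : ∃ t, χ t ≠ 0) :
    Xor' (χ none = 1 ∧ ∀ t, χ t = 1)
      (χ none = 0 ∧
        ∃! γ : PathSp G, ∀ α : FinPath G, (χ (some α) = 1 ↔ Ext G α γ)) :=
  semicharacter_classification_general G χ hval hmul hne

end GraphCstar
end

section
/- The set X = Y_∞ ∪ Z is a closed subset of the path space Y ∪ Z, and X is invariant under tail equivalence: if x ∈ X and y ∈ Y ∪ Z is tail equivalent to x, then y ∈ X. -/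
namespace GraphCstar

variable (G : Graph)

/-! A finite path α whose terminal vertex emits only finitely many edges e₁, …, eₙ is an
isolated point of the path space: every path in `D_α` other than α itself continues α by some eᵢ,
so `{α} = D_α ∖ (D_{αe₁} ∪ … ∪ D_{αeₙ})`. Hence the complement of `X` is open. Tail-equivalent
finite paths share their terminal vertex, and a path tail equivalent to an infinite one is
infinite, so `X` is invariant. -/

section

variable {G}

theorem FinPath.ext_of_edges {α β : FinPath G} (hs : α.start = β.start)
    (he : α.edges = β.edges) : α = β := by
  cases α; cases β
  cases hs; cases he; rfl

theorem InfPath.ext_of_seq {z w : InfPath G} (h : z.seq = w.seq) : z = w := by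
  cases z; cases w
  cases h; rfl

def InfPath.tail (w : InfPath G) : InfPath G :=
  ⟨fun n => w.seq (n + 1), fun i => w.valid (i + 1)⟩

theorem consInf_seq_zero_tail (w : InfPath G) : consInf G (w.seq 0) w.tail (w.valid 0) = w :=
  InfPath.ext_of_seq <| funext fun n => by cases n <;> rfl

theorem FinPath.start_concatInf (α : FinPath G) (w : InfPath G) (h : w.start = α.rngF) :
    (α.concatInf w h).start = α.start :=
  (appendInfAux G α.edges α.start α.valid w h).2

theorem FinPath.concatInf_congr (α : FinPath G) {w w' : InfPath G} (hw : w = w')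
    (h : w.start = α.rngF) (h' : w'.start = α.rngF) :
    α.concatInf w h = α.concatInf w' h' := by
  cases hw; rfl

theorem appendInfAux_append (l₁ l₂ : List G.Ed) (v : G.V) (hv : Valid G v (l₁ ++ l₂))
    (z : InfPath G) (h : z.start = rngTo G v (l₁ ++ l₂)) :
    (appendInfAux G (l₁ ++ l₂) v hv z h).1 =
      (appendInfAux G l₁ v ((valid_append G _ _ _).mp hv).1
        (appendInfAux G l₂ (rngTo G v l₁) ((valid_append G _ _ _).mp hv).2 z
          (h.trans (rngTo_append G _ _ _))).1
        (appendInfAux G l₂ _ _ z _).2).1 := by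
  induction l₁ generalizing v with
  | nil => rfl
  | cons e l ih =>
    simp only [List.cons_append, appendInfAux]
    congr 1
    exact ih _ hv.2 h

theorem FinPath.concat_concatInf (α β : FinPath G) (hβ : β.start = α.rngF) (w : InfPath G)
    (hw : w.start = β.rngF) :
    (α.concat β hβ).concatInf w (hw.trans (α.rngF_concat β hβ).symm) =
      α.concatInf (β.concatInf w hw) ((β.start_concatInf w hw).trans hβ) := by
  obtain ⟨b, l, hl⟩ := β
  change b = α.rngF at hβ
  subst hβ
  exact appendInfAux_append α.edges l α.start _ w _

theorem mem_Dset_self (α : FinPath G) : Sum.inl α ∈ Dset G α :=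
  Or.inl ⟨FinPath.vp α.rngF, rfl,
    congrArg Sum.inl (FinPath.ext_of_edges rfl (List.append_nil _).symm)⟩

theorem inl_notMem_Dset_of_len_lt {α β : FinPath G} (h : α.len < β.len) :
    Sum.inl α ∉ Dset G β := by
  rintro (⟨γ, _, heq⟩ | ⟨w, _, heq⟩)
  · have hlen := congrArg FinPath.len (Sum.inl_injective heq)
    simp only [FinPath.len, FinPath.concat, List.length_append] at hlen h
    omega
  · exact Sum.inl_ne_inr heq

theorem mem_Dset_concat_ep_of_mem_Dset {α : FinPath G} {x : PathSp G} (hx : x ∈ Dset G α)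
    (hne : x ≠ Sum.inl α) :
    ∃ (e : G.Ed) (he : (FinPath.ep e).start = α.rngF),
      x ∈ Dset G (α.concat (FinPath.ep e) he) := by
  rcases hx with ⟨⟨b, _ | ⟨f, l⟩, hl⟩, hb, rfl⟩ | ⟨w, hw, rfl⟩
  · exact (hne (congrArg Sum.inl (FinPath.ext_of_edges rfl (List.append_nil _)))).elim
  · refine ⟨f, hl.1.trans hb, Or.inl ⟨⟨G.rng f, l, hl.2⟩, ?_, ?_⟩⟩
    · exact (FinPath.rngF_concat α (FinPath.ep f) _).symm
    · exact congrArg Sum.inl (FinPath.ext_of_edges rfl (by simp [FinPath.concat, FinPath.ep]))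
  · refine ⟨w.seq 0, hw, Or.inr ⟨w.tail,
      (w.valid 0).trans (FinPath.rngF_concat α (FinPath.ep _) _).symm, ?_⟩⟩
    exact congrArg Sum.inr <| (α.concatInf_congr (consInf_seq_zero_tail w).symm _ _).trans
      (FinPath.concat_concatInf α (FinPath.ep _) hw w.tail (w.valid 0)).symm

attribute [local instance] pathTop

theorem isOpen_Dset (α : FinPath G) : IsOpen (Dset G α) :=
  TopologicalSpace.isOpen_generateFrom_of_mem (Or.inl ⟨α, rfl⟩)

theorem isClosed_Dset (α : FinPath G) : IsClosed (Dset G α) :=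
  ⟨TopologicalSpace.isOpen_generateFrom_of_mem (Or.inr ⟨α, rfl⟩)⟩

theorem isOpen_singleton_inl {α : FinPath G} (hα : ¬ Vinf G α.rngF) :
    IsOpen ({Sum.inl α} : Set (PathSp G)) := by
  have : Finite {e : G.Ed // G.src e = α.rngF} := (Set.not_infinite.mp hα).to_subtype
  have hsingleton : ({Sum.inl α} : Set (PathSp G)) =
      Dset G α ∩ ⋂ e : {e : G.Ed // G.src e = α.rngF},
        (Dset G (α.concat (FinPath.ep e.1) e.2))ᶜ := by
    ext x
    simp only [Set.mem_inter_iff, Set.mem_iInter, Set.mem_compl_iff]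
    constructor
    · rintro rfl
      exact ⟨mem_Dset_self α, fun e => inl_notMem_Dset_of_len_lt
        (by simp [FinPath.len, FinPath.concat, FinPath.ep])⟩
    · rintro ⟨hx, hnot⟩
      by_contra hne
      obtain ⟨e, he, hxe⟩ := mem_Dset_concat_ep_of_mem_Dset hx hne
      exact hnot ⟨e, he⟩ hxe
  rw [hsingleton]
  exact (isOpen_Dset α).inter (isOpen_iInter_of_finite fun e => (isClosed_Dset _).isOpen_compl)

theorem isClosed_Xset : IsClosed (Xset G) := by
  rw [← isOpen_compl_iff, isOpen_iff_forall_mem_open]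
  rintro (α | w) hx
  · exact ⟨{Sum.inl α}, Set.singleton_subset_iff.mpr hx, isOpen_singleton_inl hx, rfl⟩
  · exact absurd trivial hx

theorem invariantS_Xset : InvariantS G (Xset G) := by
  rintro x hx y (⟨α, β, γ, h₁, h₂, rfl, rfl⟩ | ⟨_, _, _, _, _, _, rfl⟩)
  · change Vinf G (α.concat γ h₁).rngF at hx
    change Vinf G (β.concat γ h₂).rngF
    rwa [FinPath.rngF_concat] at hx ⊢
  · trivial

end

theorem Xset_closed_and_invariant_general (G : Graph) :
    @IsClosed (PathSp G) (pathTop G) (Xset G) ∧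
    ∀ x ∈ Xset G, ∀ y : PathSp G, TailEq G x y → y ∈ Xset G :=
  ⟨isClosed_Xset, invariantS_Xset⟩

/-- The set `X = Y_∞ ∪ Z` is a closed subset of the path space `Y ∪ Z`,
and `X` is invariant under tail equivalence. -/
theorem Xset_closed_and_invariant (G : Graph) [Countable G.V] [Countable G.Ed]
    (hns : ∀ v : G.V, ∃ e : G.Ed, G.src e = v) :
    @IsClosed (PathSp G) (pathTop G) (Xset G) ∧
    ∀ x ∈ Xset G, ∀ y : PathSp G, TailEq G x y → y ∈ Xset G :=
  Xset_closed_and_invariant_general G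

end GraphCstar
end

section
/- Let Π : T → B(𝓗) be a map into the bounded operators on a Hilbert space 𝓗 satisfying Π(st) = Π(s)Π(t) and Π(s*) = Π(s)* for all s, t ∈ T, Π(z) = 0, and Π(v,v) = Σ_{e : s(e)=v} Π(e,e) for every v ∈ V_f. Then setting P_v = Π(v,v) (v ∈ V) and S_e = Π(e, r(e)) (e ∈ Ed) defines a representation of E on 𝓗; in particular the P_v are mutually orthogonal projections, the S_eS_e* are mutually orthogonal projections, S_e*S_e = P_{r(e)}, P_v = Σ_{s(e)=v} S_eS_e* for v ∈ V_f, and P_{s(e)}S_eS_e* = S_eS_e*. -/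
namespace GraphCstar

variable (G : Graph)

variable (𝓗 : Type) [NormedAddCommGroup 𝓗] [InnerProductSpace ℂ 𝓗] [CompleteSpace 𝓗]

variable {G 𝓗}

/-- `P_v = Π(v,v)`. -/
def PvOf (Pi : Option (FinPath G × FinPath G) → 𝓗 →L[ℂ] 𝓗) (v : G.V) : 𝓗 →L[ℂ] 𝓗 :=
  Pi (some (FinPath.vp v, FinPath.vp v))

/-- `S_e = Π(e, r(e))`. -/
def SeOf (Pi : Option (FinPath G × FinPath G) → 𝓗 →L[ℂ] 𝓗) (e : G.Ed) : 𝓗 →L[ℂ] 𝓗 :=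
  Pi (some (FinPath.ep e, FinPath.vp (G.rng e)))

/-- `S_e S_e*`. -/
noncomputable def SSeOf (Pi : Option (FinPath G × FinPath G) → 𝓗 →L[ℂ] 𝓗) (e : G.Ed) :
    𝓗 →L[ℂ] 𝓗 :=
  SeOf Pi e * ContinuousLinearMap.adjoint (SeOf Pi e)

/-
The pairs `(α, γ)` multiply like matrix units: `(α, γ)(γ, β) = (α, β)`, the product of two
pairs is `z` unless one middle path extends the other, and `(v, v)` acts as a left unit on
the pairs whose first path starts at `v`. Since `Π` is a multiplicative `*`-map killing `z`,
each `Π(α, α)` is a projection, `Π(α, α)Π(β, β) = 0` for incomparable `α, β`,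
`S_e* = Π(r(e), e)`, `S_e S_e* = Π(e, e)` and `S_e* S_e = Π(r(e), r(e))`.
-/

theorem FinPath.ext_s13 {G : Graph} {α β : FinPath G} (h₁ : α.start = β.start)
    (h₂ : α.edges = β.edges) : α = β := by
  cases α; cases β; simp_all

section PathAlgebra

variable {G : Graph}

theorem some_mem_TsetT {α β : FinPath G} (h : α.rngF = β.rngF) :
    some (α, β) ∈ TsetT G := by
  rintro α' β' ⟨⟩
  exact h

theorem isPref_refl (α : FinPath G) : IsPref G α α :=
  ⟨rfl, List.prefix_refl _⟩

theorem isPref_vp_start (α : FinPath G) : IsPref G (FinPath.vp α.start) α :=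
  ⟨rfl, List.nil_prefix⟩

theorem eq_of_isPref_ep {e f : G.Ed} (h : IsPref G (FinPath.ep e) (FinPath.ep f)) : e = f := by
  obtain ⟨_, t, ht⟩ := h
  exact (List.cons.inj ht).1

theorem diff_self (α : FinPath G) : diff G α α = FinPath.vp α.rngF :=
  FinPath.ext_s13 (by simp [diff, FinPath.rngF, FinPath.vp]) (by simp [diff, FinPath.vp])

theorem diff_vp_start (α : FinPath G) : diff G (FinPath.vp α.start) α = α :=
  FinPath.ext_s13 rfl (by simp [diff, FinPath.vp])

theorem catP_vp_rngF (α : FinPath G) : catP G α (FinPath.vp α.rngF) = α := by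
  rw [catP, dif_pos (show (FinPath.vp α.rngF).start = α.rngF from rfl)]
  exact FinPath.ext_s13 rfl (List.append_nil _)

theorem catP_vp_start (α : FinPath G) : catP G (FinPath.vp α.start) α = α := by
  rw [catP, dif_pos (show α.start = (FinPath.vp α.start).rngF from rfl)]
  exact FinPath.ext_s13 rfl (List.nil_append _)

open Classical in
theorem mulT_some_some (α₁ β₁ α₂ β₂ : FinPath G) :
    mulT G (some (α₁, β₁)) (some (α₂, β₂)) =
      if IsPref G β₁ α₂ then some (catP G α₁ (diff G β₁ α₂), β₂)
      else if IsPref G α₂ β₁ then some (α₁, catP G β₂ (diff G α₂ β₁))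
      else none :=
  rfl

theorem mulT_cancel {α γ : FinPath G} (β : FinPath G) (h : γ.rngF = α.rngF) :
    mulT G (some (α, γ)) (some (γ, β)) = some (α, β) := by
  rw [mulT_some_some, if_pos (isPref_refl γ), diff_self, h, catP_vp_rngF]

theorem mulT_vp_start (α β : FinPath G) :
    mulT G (some (FinPath.vp α.start, FinPath.vp α.start)) (some (α, β)) = some (α, β) := by
  rw [mulT_some_some, if_pos (isPref_vp_start α), diff_vp_start, catP_vp_start]

theorem mulT_eq_none {α₁ β₁ α₂ β₂ : FinPath G} (h₁ : ¬IsPref G β₁ α₂) (h₂ : ¬IsPref G α₂ β₁) :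
    mulT G (some (α₁, β₁)) (some (α₂, β₂)) = none := by
  rw [mulT_some_some, if_neg h₁, if_neg h₂]

end PathAlgebra

section Multiplicative

variable {G : Graph} {M : Type*} [MulZeroClass M] {Pi : Option (FinPath G × FinPath G) → M}

theorem map_some_mul_map_some
    (hmul : ∀ s ∈ TsetT G, ∀ t ∈ TsetT G, Pi (mulT G s t) = Pi s * Pi t)
    {α γ β : FinPath G} (hαγ : α.rngF = γ.rngF) (hγβ : γ.rngF = β.rngF) :
    Pi (some (α, γ)) * Pi (some (γ, β)) = Pi (some (α, β)) := by
  rw [← hmul _ (some_mem_TsetT hαγ) _ (some_mem_TsetT hγβ), mulT_cancel β hαγ.symm]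

theorem map_some_mul_map_some_eq_zero
    (hmul : ∀ s ∈ TsetT G, ∀ t ∈ TsetT G, Pi (mulT G s t) = Pi s * Pi t)
    (hz : Pi none = 0) {α β : FinPath G}
    (h₁ : ¬IsPref G α β) (h₂ : ¬IsPref G β α) :
    Pi (some (α, α)) * Pi (some (β, β)) = 0 := by
  rw [← hmul _ (some_mem_TsetT rfl) _ (some_mem_TsetT rfl), mulT_eq_none h₁ h₂, hz]

theorem map_vp_start_mul_map_some
    (hmul : ∀ s ∈ TsetT G, ∀ t ∈ TsetT G, Pi (mulT G s t) = Pi s * Pi t)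
    {α β : FinPath G} (h : α.rngF = β.rngF) :
    Pi (some (FinPath.vp α.start, FinPath.vp α.start)) * Pi (some (α, β)) = Pi (some (α, β)) := by
  rw [← hmul _ (some_mem_TsetT rfl) _ (some_mem_TsetT h), mulT_vp_start]

end Multiplicative

section Representation

variable {G : Graph} {𝓗 : Type} [NormedAddCommGroup 𝓗] [InnerProductSpace ℂ 𝓗]
  [CompleteSpace 𝓗] {Pi : Option (FinPath G × FinPath G) → 𝓗 →L[ℂ] 𝓗}

open ContinuousLinearMap

theorem adjoint_map_some
    (hstar : ∀ s ∈ TsetT G, Pi (starT G s) = adjoint (Pi s))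
    {α β : FinPath G} (h : α.rngF = β.rngF) :
    adjoint (Pi (some (α, β))) = Pi (some (β, α)) :=
  (hstar _ (some_mem_TsetT h)).symm

theorem map_diag_isProjection
    (hmul : ∀ s ∈ TsetT G, ∀ t ∈ TsetT G, Pi (mulT G s t) = Pi s * Pi t)
    (hstar : ∀ s ∈ TsetT G, Pi (starT G s) = adjoint (Pi s)) (α : FinPath G) :
    adjoint (Pi (some (α, α))) = Pi (some (α, α)) ∧
      Pi (some (α, α)) * Pi (some (α, α)) = Pi (some (α, α)) :=
  ⟨adjoint_map_some hstar rfl, map_some_mul_map_some hmul rfl rfl⟩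

theorem SSeOf_eq
    (hmul : ∀ s ∈ TsetT G, ∀ t ∈ TsetT G, Pi (mulT G s t) = Pi s * Pi t)
    (hstar : ∀ s ∈ TsetT G, Pi (starT G s) = adjoint (Pi s)) (e : G.Ed) :
    SSeOf Pi e = Pi (some (FinPath.ep e, FinPath.ep e)) := by
  rw [SSeOf, SeOf, adjoint_map_some hstar (α := FinPath.ep e) (β := FinPath.vp (G.rng e)) rfl]
  exact map_some_mul_map_some hmul rfl rfl

theorem adjoint_SeOf_mul_SeOf
    (hmul : ∀ s ∈ TsetT G, ∀ t ∈ TsetT G, Pi (mulT G s t) = Pi s * Pi t)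
    (hstar : ∀ s ∈ TsetT G, Pi (starT G s) = adjoint (Pi s)) (e : G.Ed) :
    adjoint (SeOf Pi e) * SeOf Pi e = PvOf Pi (G.rng e) := by
  rw [SeOf, adjoint_map_some hstar (α := FinPath.ep e) (β := FinPath.vp (G.rng e)) rfl]
  exact map_some_mul_map_some hmul rfl rfl

theorem PvOf_src_mul_SSeOf
    (hmul : ∀ s ∈ TsetT G, ∀ t ∈ TsetT G, Pi (mulT G s t) = Pi s * Pi t)
    (hstar : ∀ s ∈ TsetT G, Pi (starT G s) = adjoint (Pi s)) (e : G.Ed) :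
    PvOf Pi (G.src e) * SSeOf Pi e = SSeOf Pi e := by
  rw [SSeOf_eq hmul hstar]
  exact map_vp_start_mul_map_some hmul (α := FinPath.ep e) rfl

end Representation

theorem rep_of_semigroup_rep_general (G : Graph)
    (𝓗 : Type) [NormedAddCommGroup 𝓗] [InnerProductSpace ℂ 𝓗] [CompleteSpace 𝓗]
    (Pi : Option (FinPath G × FinPath G) → 𝓗 →L[ℂ] 𝓗)
    (hmul : ∀ s ∈ TsetT G, ∀ t ∈ TsetT G, Pi (mulT G s t) = Pi s * Pi t)
    (hstar : ∀ s ∈ TsetT G, Pi (starT G s) = ContinuousLinearMap.adjoint (Pi s))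
    (hz : Pi none = 0)
    (hsum : ∀ (v : G.V) (h : {e : G.Ed | G.src e = v}.Finite),
      Pi (some (FinPath.vp v, FinPath.vp v)) =
        ∑ e ∈ h.toFinset, Pi (some (FinPath.ep e, FinPath.ep e))) :
    (∀ v : G.V, ContinuousLinearMap.adjoint (PvOf Pi v) = PvOf Pi v ∧
      PvOf Pi v * PvOf Pi v = PvOf Pi v) ∧
    (∀ v w : G.V, v ≠ w → PvOf Pi v * PvOf Pi w = 0) ∧
    (∀ e : G.Ed, ContinuousLinearMap.adjoint (SSeOf Pi e) = SSeOf Pi e ∧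
      SSeOf Pi e * SSeOf Pi e = SSeOf Pi e) ∧
    (∀ e f : G.Ed, e ≠ f → SSeOf Pi e * SSeOf Pi f = 0) ∧
    (∀ e : G.Ed, ContinuousLinearMap.adjoint (SeOf Pi e) * SeOf Pi e = PvOf Pi (G.rng e)) ∧
    (∀ (v : G.V) (h : {e : G.Ed | G.src e = v}.Finite),
      PvOf Pi v = ∑ e ∈ h.toFinset, SSeOf Pi e) ∧
    (∀ e : G.Ed, PvOf Pi (G.src e) * SSeOf Pi e = SSeOf Pi e) := by
  have hSS := SSeOf_eq hmul hstar
  refine ⟨fun v => map_diag_isProjection hmul hstar _, fun v w hvw => ?_,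
    fun e => ?_, fun e f hef => ?_, adjoint_SeOf_mul_SeOf hmul hstar, fun v h => ?_,
    PvOf_src_mul_SSeOf hmul hstar⟩
  · exact map_some_mul_map_some_eq_zero hmul hz
      (fun h => hvw h.1) (fun h => hvw h.1.symm)
  · rw [hSS]
    exact map_diag_isProjection hmul hstar _
  · rw [hSS, hSS]
    exact map_some_mul_map_some_eq_zero hmul hz
      (fun h => hef (eq_of_isPref_ep h)) (fun h => hef (eq_of_isPref_ep h).symm)
  · rw [PvOf, hsum v h]
    exact Finset.sum_congr rfl fun e _ => (hSS e).symm

/-- If `Π : T → B(𝓗)` is multiplicative and `*`-preserving, `Π(z) = 0`,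
and `Π(v,v) = Σ_{s(e)=v} Π(e,e)` for every `v ∈ V_f`, then `P_v = Π(v,v)` and
`S_e = Π(e, r(e))` define a representation of the graph `E` on `𝓗`: the `P_v` are
mutually orthogonal projections, the `S_e S_e*` are mutually orthogonal projections,
`S_e* S_e = P_{r(e)}`, `P_v = Σ_{s(e)=v} S_e S_e*` for `v ∈ V_f`, and
`P_{s(e)} S_e S_e* = S_e S_e*`. -/
theorem rep_of_semigroup_rep (G : Graph) [Countable G.V] [Countable G.Ed]
    (𝓗 : Type) [NormedAddCommGroup 𝓗] [InnerProductSpace ℂ 𝓗] [CompleteSpace 𝓗]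
    (Pi : Option (FinPath G × FinPath G) → 𝓗 →L[ℂ] 𝓗)
    (hmul : ∀ s ∈ TsetT G, ∀ t ∈ TsetT G, Pi (mulT G s t) = Pi s * Pi t)
    (hstar : ∀ s ∈ TsetT G, Pi (starT G s) = ContinuousLinearMap.adjoint (Pi s))
    (hz : Pi none = 0)
    (hsum : ∀ (v : G.V) (h : {e : G.Ed | G.src e = v}.Finite),
      Pi (some (FinPath.vp v, FinPath.vp v)) =
        ∑ e ∈ h.toFinset, Pi (some (FinPath.ep e, FinPath.ep e))) :
    (∀ v : G.V, ContinuousLinearMap.adjoint (PvOf Pi v) = PvOf Pi v ∧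
      PvOf Pi v * PvOf Pi v = PvOf Pi v) ∧
    (∀ v w : G.V, v ≠ w → PvOf Pi v * PvOf Pi w = 0) ∧
    (∀ e : G.Ed, ContinuousLinearMap.adjoint (SSeOf Pi e) = SSeOf Pi e ∧
      SSeOf Pi e * SSeOf Pi e = SSeOf Pi e) ∧
    (∀ e f : G.Ed, e ≠ f → SSeOf Pi e * SSeOf Pi f = 0) ∧
    (∀ e : G.Ed, ContinuousLinearMap.adjoint (SeOf Pi e) * SeOf Pi e = PvOf Pi (G.rng e)) ∧
    (∀ (v : G.V) (h : {e : G.Ed | G.src e = v}.Finite),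
      PvOf Pi v = ∑ e ∈ h.toFinset, SSeOf Pi e) ∧
    (∀ e : G.Ed, PvOf Pi (G.src e) * SSeOf Pi e = SSeOf Pi e) :=
  rep_of_semigroup_rep_general G 𝓗 Pi hmul hstar hz hsum

end GraphCstar
end
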